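/- arXiv:1009.1825 — 8 statements merged into one kernel-verified Lean document; each statement's English description precedes it below -/
import Mathlib

section
/- Let X = Y = [0,1] with μ = ν the Lebesgue measure, and define c(x,y) = 0 if y < x, c(x,y) = 1 if x = y, and c(x,y) = ∞ if x < y. Then any transport plan π ∈ Π(μ,ν) with finite cost ∫∫ c dπ must be concentrated on the diagonal {(x,x) : x ∈ [0,1]}, and consequently the primal value P_c = inf{∫∫ c dπ : π ∈ Π(μ,ν)} equals 1. -/
/-! With equal marginals, `π {t < x} = π {t < y}` for every `t`, so the mass `π` carries from
`x > t` down to `y ≤ t` equals the mass it carries from `x ≤ t` up to `y > t`. Finite cost forbids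
upward moves (`c = ∞` above the diagonal), so no mass crosses a rational `t` downwards either, and
`π` lives on the diagonal, where `c = 1`. Hence every finite-cost plan has cost `1`, which the
diagonal plan `x ↦ (x, x)` attains. -/

open MeasureTheory Set

noncomputable def muI : Measure ℝ := volume.restrict (Set.Icc 0 1)

noncomputable def c0 : ℝ × ℝ → ENNReal := fun p =>
  if p.2 < p.1 then 0 else if p.1 = p.2 then 1 else ⊤

section MarginalsOnReal

variable {π : Measure (ℝ × ℝ)} [IsFiniteMeasure π]

lemma measure_snd_le_lt_fst_eq (hπ : π.map Prod.fst = π.map Prod.snd) (t : ℝ) :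
    π {p | p.2 ≤ t ∧ t < p.1} = π {p | p.1 ≤ t ∧ t < p.2} := by
  have hfst : MeasurableSet (Prod.fst ⁻¹' Ioi t : Set (ℝ × ℝ)) := measurable_fst measurableSet_Ioi
  have hsnd : MeasurableSet (Prod.snd ⁻¹' Ioi t : Set (ℝ × ℝ)) := measurable_snd measurableSet_Ioi
  have hsame : π (Prod.fst ⁻¹' Ioi t) = π (Prod.snd ⁻¹' Ioi t) := by
    rw [← Measure.map_apply measurable_fst measurableSet_Ioi, hπ,
      Measure.map_apply measurable_snd measurableSet_Ioi]
  convert measure_sdiff_symm hfst.nullMeasurableSet hsnd.nullMeasurableSet hsame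
    (measure_ne_top _ _) using 2 <;>
  · ext p
    simp [and_comm]

lemma measure_snd_lt_fst_eq_zero (hπ : π.map Prod.fst = π.map Prod.snd)
    (hup : π {p | p.1 < p.2} = 0) : π {p | p.2 < p.1} = 0 := by
  have hcover : {p : ℝ × ℝ | p.2 < p.1} ⊆ ⋃ q : ℚ, {p | p.2 ≤ q ∧ (q : ℝ) < p.1} := by
    intro p (hp : p.2 < p.1)
    obtain ⟨q, hq₂, hq₁⟩ := exists_rat_btwn hp
    exact mem_iUnion.2 ⟨q, hq₂.le, hq₁⟩
  refine measure_mono_null hcover (measure_iUnion_null fun q => ?_)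
  rw [measure_snd_le_lt_fst_eq hπ]
  exact measure_mono_null (fun p hp => hp.1.trans_lt hp.2) hup

lemma measure_fst_ne_snd_eq_zero (hπ : π.map Prod.fst = π.map Prod.snd)
    (hup : π {p | p.1 < p.2} = 0) : π {p | p.1 ≠ p.2} = 0 := by
  refine measure_mono_null (fun p hp => ?_)
    (measure_union_null hup (measure_snd_lt_fst_eq_zero hπ hup))
  exact lt_or_gt_of_ne hp

end MarginalsOnReal

instance : IsProbabilityMeasure muI := ⟨by simp [muI, Real.volume_Icc]⟩

lemma isProbabilityMeasure_of_map_fst_eq_muI {π : Measure (ℝ × ℝ)}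
    (h : π.map Prod.fst = muI) : IsProbabilityMeasure π :=
  have : IsProbabilityMeasure (π.map Prod.fst) := h ▸ inferInstance
  Measure.isProbabilityMeasure_of_map Prod.fst

lemma measurable_c0 : Measurable c0 :=
  Measurable.ite (measurableSet_lt measurable_snd measurable_fst) measurable_const <|
    Measurable.ite (measurableSet_eq_fun measurable_fst measurable_snd)
      measurable_const measurable_const

lemma c0_eq_top_iff {p : ℝ × ℝ} : c0 p = ⊤ ↔ p.1 < p.2 := by
  rcases lt_trichotomy p.1 p.2 with h | h | h
  · simp [c0, h, h.ne, h.not_gt]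
  · simp [c0, h]
  · simp [c0, h, h.not_gt]

lemma c0_of_fst_eq_snd {p : ℝ × ℝ} (h : p.1 = p.2) : c0 p = 1 := by
  simp [c0, h]

lemma measure_fst_ne_snd_eq_zero_of_lintegral_c0_ne_top {π : Measure (ℝ × ℝ)}
    (h1 : π.map Prod.fst = muI) (h2 : π.map Prod.snd = muI) (hfin : ∫⁻ p, c0 p ∂π ≠ ⊤) :
    π {p | p.1 ≠ p.2} = 0 := by
  have := isProbabilityMeasure_of_map_fst_eq_muI h1
  have hup : π {p | p.1 < p.2} = 0 := by
    simpa only [c0_eq_top_iff] using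
      measure_eq_top_of_lintegral_ne_top measurable_c0.aemeasurable hfin
  exact measure_fst_ne_snd_eq_zero (h1.trans h2.symm) hup

lemma one_le_lintegral_c0 {π : Measure (ℝ × ℝ)}
    (h1 : π.map Prod.fst = muI) (h2 : π.map Prod.snd = muI) : 1 ≤ ∫⁻ p, c0 p ∂π := by
  by_cases hfin : ∫⁻ p, c0 p ∂π = ⊤
  · simp [hfin]
  have := isProbabilityMeasure_of_map_fst_eq_muI h1
  have hdiag : c0 =ᵐ[π] fun _ => 1 :=
    measure_mono_null (fun p hp => mt c0_of_fst_eq_snd hp)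
      (measure_fst_ne_snd_eq_zero_of_lintegral_c0_ne_top h1 h2 hfin)
  simp [lintegral_congr_ae hdiag]

lemma lintegral_c0_map_diag : ∫⁻ p, c0 p ∂(muI.map fun x => (x, x)) = 1 := by
  rw [lintegral_map measurable_c0 (by fun_prop)]
  simp [c0_of_fst_eq_snd]

theorem stmt0 :
    (∀ π : Measure (ℝ × ℝ), π.map Prod.fst = muI → π.map Prod.snd = muI →
      (∫⁻ p, c0 p ∂π) ≠ ⊤ → π {p : ℝ × ℝ | p.1 ≠ p.2} = 0) ∧
    (⨅ π ∈ {π : Measure (ℝ × ℝ) | π.map Prod.fst = muI ∧ π.map Prod.snd = muI},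
      ∫⁻ p, c0 p ∂π) = 1 := by
  refine ⟨fun π => measure_fst_ne_snd_eq_zero_of_lintegral_c0_ne_top,
    le_antisymm ?_ (le_iInf₂ fun π hπ => one_le_lintegral_c0 hπ.1 hπ.2)⟩
  have hdiag_plan : (muI.map fun x => (x, x)).map Prod.fst = muI ∧
      (muI.map fun x => (x, x)).map Prod.snd = muI :=
    ⟨(Measure.fst_map_prodMk measurable_id).trans Measure.map_id,
      (Measure.snd_map_prodMk measurable_id).trans Measure.map_id⟩
  exact (iInf₂_le (muI.map fun x => (x, x)) hdiag_plan).trans_eq lintegral_c0_map_diag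
end

section
/- Let X, Y be Polish spaces with Borel probability measures μ, ν, and let (φ_n : X → ℝ) and (ψ_n : Y → ℝ) be sequences of Borel measurable functions. Then there exist Polish topologies τ_X on X and τ_Y on Y, refining the original topologies and generating the same Borel sets, such that the function sup_n (φ_n(x) + ψ_n(y)) is lower semi-continuous on X × Y with respect to the product topology τ_X × τ_Y. -/
open MeasureTheory Set

/-!
The family `x ↦ (φ n x)ₙ` is a Borel map into the second-countable space `ℕ → ℝ`, so there is a
finer Polish topology on `X` making every `φ n` continuous (every Borel set is clopen in some finer
Polish topology), and any finer Polish topology has the same Borel sets; likewise for `Y`. For these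
topologies each `(x, y) ↦ φ n x + ψ n y` is continuous on `X × Y`, and a supremum of continuous
functions is lower semicontinuous.
-/

theorem BorelSpace.of_polishSpace_le {X : Type*} {t t' : TopologicalSpace X} [m : MeasurableSpace X]
    (ht : @PolishSpace X t) (hB : @BorelSpace X t m) (ht' : @PolishSpace X t') (hle : t' ≤ t) :
    @BorelSpace X t' m :=
  ⟨hB.measurable_eq.trans (borel_eq_borel_of_le ht' ht hle).symm⟩

theorem exists_polishSpace_le_continuous_of_measurable {ι X β : Type*} [Countable ι]
    [t : TopologicalSpace X] [hP : PolishSpace X] [MeasurableSpace X] [hB : BorelSpace X]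
    [TopologicalSpace β] [SecondCountableTopology β] [MeasurableSpace β] [OpensMeasurableSpace β]
    {f : ι → X → β} (hf : ∀ i, Measurable (f i)) :
    ∃ t' : TopologicalSpace X, t' ≤ t ∧ @PolishSpace X t' ∧ @BorelSpace X t' _ ∧
      ∀ i, @Continuous X β t' _ (f i) := by
  obtain ⟨t', hle, hcont, ht'⟩ := (measurable_pi_lambda _ hf).exists_continuous
  exact ⟨t', hle, ht', .of_polishSpace_le hP hB ht' hle,
    fun i => (continuous_apply i).comp hcont⟩

theorem lowerSemicontinuous_iSup_coe_add {ι X Y : Type*} [TopologicalSpace X] [TopologicalSpace Y]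
    {f : ι → X → ℝ} {g : ι → Y → ℝ} (hf : ∀ i, Continuous (f i)) (hg : ∀ i, Continuous (g i)) :
    LowerSemicontinuous fun p : X × Y => ⨆ i, ((f i p.1 : EReal) + (g i p.2 : EReal)) := by
  refine lowerSemicontinuous_iSup fun i => Continuous.lowerSemicontinuous ?_
  simp only [← EReal.coe_add]
  exact continuous_coe_real_ereal.comp
    (((hf i).comp continuous_fst).add ((hg i).comp continuous_snd))

theorem stmt6_general {X Y : Type*}
    [tX : TopologicalSpace X] [PolishSpace X] [mX : MeasurableSpace X] [BorelSpace X]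
    [tY : TopologicalSpace Y] [PolishSpace Y] [mY : MeasurableSpace Y] [BorelSpace Y]
    (φ : ℕ → X → ℝ) (ψ : ℕ → Y → ℝ)
    (hφ : ∀ n, Measurable (φ n)) (hψ : ∀ n, Measurable (ψ n)) :
    ∃ τX : TopologicalSpace X, ∃ τY : TopologicalSpace Y,
      τX ≤ tX ∧ τY ≤ tY ∧ @PolishSpace X τX ∧ @PolishSpace Y τY ∧
      @BorelSpace X τX mX ∧ @BorelSpace Y τY mY ∧
      @LowerSemicontinuous (X × Y) EReal (@instTopologicalSpaceProd X Y τX τY) _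
        (fun p => ⨆ n, ((φ n p.1 : EReal) + (ψ n p.2 : EReal))) := by
  obtain ⟨τX, hτX, hPX, hBX, hφc⟩ := exists_polishSpace_le_continuous_of_measurable hφ
  obtain ⟨τY, hτY, hPY, hBY, hψc⟩ := exists_polishSpace_le_continuous_of_measurable hψ
  exact ⟨τX, τY, hτX, hτY, hPX, hPY, hBX, hBY,
    @lowerSemicontinuous_iSup_coe_add _ _ _ τX τY _ _ hφc hψc⟩

theorem stmt6 {X Y : Type*}
    [tX : TopologicalSpace X] [PolishSpace X] [mX : MeasurableSpace X] [BorelSpace X]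
    [tY : TopologicalSpace Y] [PolishSpace Y] [mY : MeasurableSpace Y] [BorelSpace Y]
    (μ : Measure X) (ν : Measure Y) [IsProbabilityMeasure μ] [IsProbabilityMeasure ν]
    (φ : ℕ → X → ℝ) (ψ : ℕ → Y → ℝ)
    (hφ : ∀ n, Measurable (φ n)) (hψ : ∀ n, Measurable (ψ n)) :
    ∃ τX : TopologicalSpace X, ∃ τY : TopologicalSpace Y,
      τX ≤ tX ∧ τY ≤ tY ∧ @PolishSpace X τX ∧ @PolishSpace Y τY ∧
      @BorelSpace X τX mX ∧ @BorelSpace Y τY mY ∧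
      @LowerSemicontinuous (X × Y) EReal (@instTopologicalSpaceProd X Y τX τY) _
        (fun p => ⨆ n, ((φ n p.1 : EReal) + (ψ n p.2 : EReal))) :=
  stmt6_general (tX := tX) (mX := mX) (tY := tY) (mY := mY) φ ψ hφ hψ
end

section
/- Let X, Y be Polish spaces with Borel probability measures μ, ν, and let c : X × Y → [0,∞] be a Borel measurable cost function. Then there exists a Borel function c_r : X × Y → [0,∞] such that: (i) for all Borel functions φ : X → [-∞,∞), ψ : Y → [-∞,∞) with φ(x) + ψ(y) ≤ c(x,y) everywhere, one has φ(x) + ψ(y) ≤ c_r(x,y) L-almost surely; and (ii) c_r is minimal with this property, i.e., any other function d satisfying (i) satisfies c_r ≤ d L-almost surely. Moreover, there exist sequences of bounded Borel functions φ_n : X → ℝ, ψ_n : Y → ℝ with φ_n ⊕ ψ_n ≤ c for all n and c_r = sup_n (φ_n ⊕ ψ_n). -/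
open MeasureTheory Set

/-- A set `A ⊆ X × Y` is `L`-negligible (w.r.t. `μ`, `ν`). -/
def LNeg {X Y : Type*} [MeasurableSpace X] [MeasurableSpace Y]
    (μ : Measure X) (ν : Measure Y) (A : Set (X × Y)) : Prop :=
  ∃ M : Set X, ∃ N : Set Y, MeasurableSet M ∧ MeasurableSet N ∧ μ M = 0 ∧ ν N = 0 ∧
    A ⊆ (M ×ˢ (Set.univ : Set Y)) ∪ ((Set.univ : Set X) ×ˢ N)

/-- Property (i) of a rectification: every Borel dual pair `φ ⊕ ψ ≤ c` satisfies
`φ ⊕ ψ ≤ d` `L`-almost surely. -/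
def SatI {X Y : Type*} [MeasurableSpace X] [MeasurableSpace Y]
    (μ : Measure X) (ν : Measure Y) (c : X × Y → ENNReal) (d : X × Y → ENNReal) : Prop :=
  ∀ φ : X → EReal, ∀ ψ : Y → EReal, Measurable φ → Measurable ψ →
    (∀ x, φ x ≠ ⊤) → (∀ y, ψ y ≠ ⊤) →
    (∀ x y, φ x + ψ y ≤ (c (x, y) : EReal)) →
    LNeg μ ν {p : X × Y | ¬ φ p.1 + ψ p.2 ≤ (d p : EReal)}

/-- `cr` is a rectification of `c`: it satisfies (i) and is `L`-a.s. minimal with it. -/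
def IsRectification {X Y : Type*} [MeasurableSpace X] [MeasurableSpace Y]
    (μ : Measure X) (ν : Measure Y) (c cr : X × Y → ENNReal) : Prop :=
  SatI μ ν c cr ∧
    ∀ d : X × Y → ENNReal, SatI μ ν c d → LNeg μ ν {p : X × Y | ¬ cr p ≤ d p}

open Filter Topology TopologicalSpace
open scoped ENNReal

/-!
Bounded Borel dual pairs embed into the separable space `L¹(μ) × L¹(ν)`, so countably many of
them, `(φₙ, ψₙ)`, are dense among all of them. If `(φ, ψ)` is an `L¹`-limit of a sequence of
these, a subsequence converges `μ`-a.e. in the first and `ν`-a.e. in the second coordinate, so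
`φ ⊕ ψ ≤ supₙ φₙ ⊕ ψₙ` outside `M × Y ∪ X × N` with `μ M = ν N = 0`. Hence
`c_r := supₙ φₙ ⊕ ψₙ` (taking `(φ₀, ψ₀) = 0`, so that `c_r ≥ 0`) satisfies (i) for bounded pairs,
and for arbitrary Borel pairs after clamping them to `[-k, k]`. It is minimal because every
`(φₙ, ψₙ)` is itself a pair as in (i).
-/

instance countableInterFilter_prod {α β : Type*} (l₁ : Filter α) (l₂ : Filter β)
    [CountableInterFilter l₁] [CountableInterFilter l₂] : CountableInterFilter (l₁ ×ˢ l₂) := by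
  change CountableInterFilter (comap Prod.fst l₁ ⊓ comap Prod.snd l₂)
  infer_instance

theorem exists_seq_range_subset_closure_range {α Z : Type*} [TopologicalSpace Z]
    [SecondCountableTopology Z] [PseudoMetrizableSpace Z] (J : α → Z) (a₀ : α) :
    ∃ u : ℕ → α, u 0 = a₀ ∧ range J ⊆ closure (range (J ∘ u)) := by
  have : SeparableSpace (range J) := (IsSeparable.of_separableSpace _).separableSpace
  have : Nonempty (range J) := ⟨⟨J a₀, a₀, rfl⟩⟩
  obtain ⟨w, hw⟩ := exists_dense_seq (range J)
  refine ⟨fun | 0 => a₀ | n + 1 => rangeSplitting J (w n), rfl, ?_⟩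
  rintro _ ⟨a, rfl⟩
  have hwa : (⟨J a, a, rfl⟩ : range J) ∈ closure (range w) := hw _
  rw [closure_subtype, ← range_comp] at hwa
  refine closure_mono ?_ hwa
  rintro _ ⟨n, rfl⟩
  exact ⟨n + 1, apply_rangeSplitting J (w n)⟩

theorem exists_subseq_tendsto_ae_of_tendsto_toLp {X E : Type*} [MeasurableSpace X]
    [NormedAddCommGroup E] {μ : Measure X} {p : ℝ≥0∞} [Fact (1 ≤ p)] {f : ℕ → X → E}
    {g : X → E} (hf : ∀ n, MemLp (f n) p μ) (hg : MemLp g p μ)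
    (h : Tendsto (fun n => (hf n).toLp (f n)) atTop (𝓝 (hg.toLp g))) :
    ∃ ns : ℕ → ℕ, StrictMono ns ∧ ∀ᵐ x ∂μ, Tendsto (fun k => f (ns k) x) atTop (𝓝 (g x)) :=
  (tendstoInMeasure_of_tendsto_eLpNorm (zero_lt_one.trans_le Fact.out).ne' (fun n => (hf n).1)
    hg.1 ((Lp.tendsto_Lp_iff_tendsto_eLpNorm'' _ _ _ _).1 h)).exists_seq_tendsto_ae

section LNegligible

variable {X Y : Type*} [MeasurableSpace X] [MeasurableSpace Y] {μ : Measure X} {ν : Measure Y}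

theorem lNeg_setOf_not_iff {P : X × Y → Prop} :
    LNeg μ ν {p | ¬ P p} ↔ ∀ᶠ p in ae μ ×ˢ ae ν, P p := by
  constructor
  · rintro ⟨M, N, -, -, hM, hN, hsub⟩
    refine mem_prod_iff.2 ⟨Mᶜ, compl_mem_ae_iff.2 hM, Nᶜ, compl_mem_ae_iff.2 hN, ?_⟩
    rintro p ⟨hpM, hpN⟩
    by_contra hP
    rcases hsub hP with h | h
    exacts [hpM h.1, hpN h.2]
  · intro h
    obtain ⟨t₁, ht₁, t₂, ht₂, hsub⟩ := mem_prod_iff.1 h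
    refine ⟨toMeasurable μ t₁ᶜ, toMeasurable ν t₂ᶜ, measurableSet_toMeasurable _ _,
      measurableSet_toMeasurable _ _, by rwa [measure_toMeasurable, ← mem_ae_iff],
      by rwa [measure_toMeasurable, ← mem_ae_iff], fun p hP => ?_⟩
    by_contra hp
    simp only [mem_union, mem_prod, mem_univ, and_true, true_and, not_or] at hp
    exact hP (hsub ⟨not_not.1 fun h => hp.1 (subset_toMeasurable _ _ h),
      not_not.1 fun h => hp.2 (subset_toMeasurable _ _ h)⟩)

theorem exists_seq_eventually_le_iSup [IsSeparable μ] [IsSeparable ν]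
    {S : Set ((X → ℝ) × (Y → ℝ))} (hS : ∀ f ∈ S, MemLp f.1 1 μ ∧ MemLp f.2 1 ν)
    {f₀ : (X → ℝ) × (Y → ℝ)} (hf₀ : f₀ ∈ S) :
    ∃ e : ℕ → (X → ℝ) × (Y → ℝ), (∀ n, e n ∈ S) ∧ e 0 = f₀ ∧ ∀ f ∈ S,
      ∀ᶠ p in ae μ ×ˢ ae ν,
        (f.1 p.1 : EReal) + f.2 p.2 ≤ ⨆ n, ((e n).1 p.1 : EReal) + (e n).2 p.2 := by
  -- second countability of `Lp` is only registered for `p ≠ ∞`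
  have : Fact ((1 : ℝ≥0∞) ≠ ∞) := ⟨ENNReal.one_ne_top⟩
  let J : S → Lp ℝ 1 μ × Lp ℝ 1 ν := fun f => ((hS f f.2).1.toLp f.1.1, (hS f f.2).2.toLp f.1.2)
  obtain ⟨u, hu0, hu⟩ := exists_seq_range_subset_closure_range J ⟨f₀, hf₀⟩
  refine ⟨fun n => (u n).1, fun n => (u n).2, congrArg Subtype.val hu0, fun f hf => ?_⟩
  obtain ⟨z, hz, hzf⟩ := mem_closure_iff_seq_limit.1 (hu ⟨⟨f, hf⟩, rfl⟩)
  choose m hm using hz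
  have hlim : Tendsto (fun k => J (u (m k))) atTop (𝓝 (J ⟨f, hf⟩)) := (funext hm).symm ▸ hzf
  obtain ⟨ns₁, hns₁, hX⟩ := exists_subseq_tendsto_ae_of_tendsto_toLp
    (fun k => (hS _ (u (m k)).2).1) (hS f hf).1 hlim.fst_nhds
  obtain ⟨ns₂, hns₂, hY⟩ := exists_subseq_tendsto_ae_of_tendsto_toLp
    (fun k => (hS _ (u (m (ns₁ k))).2).2) (hS f hf).2 (hlim.snd_nhds.comp hns₁.tendsto_atTop)
  filter_upwards [hX.prod_mk hY] with ⟨x, y⟩ ⟨hx, hy⟩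
  have hsum := (continuous_coe_real_ereal.tendsto _).comp
    ((hx.comp hns₂.tendsto_atTop).add hy)
  refine le_of_tendsto' (by simpa only [Function.comp_def, EReal.coe_add] using hsum)
    fun k => le_iSup_of_le (m (ns₁ (ns₂ k))) le_rfl

end LNegligible

noncomputable def clampToReal (k : ℝ) (a : EReal) : ℝ :=
  (max (-(k : EReal)) (min (k : EReal) a)).toReal

section Clamp

variable {k : ℝ} {a b c : EReal}

theorem coe_clampToReal : (clampToReal k a : EReal) = max (-(k : EReal)) (min (k : EReal) a) := by
  refine EReal.coe_toReal (ne_top_of_le_ne_top (EReal.coe_ne_top |k|) (max_le ?_ ?_))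
    (ne_bot_of_le_ne_bot (EReal.coe_ne_bot (-k)) (le_max_left _ _))
  · exact_mod_cast neg_le_abs k
  · exact (min_le_left _ _).trans (by exact_mod_cast le_abs_self k)

theorem measurable_clampToReal : Measurable (clampToReal k) :=
  (measurable_const.max (measurable_const.min measurable_id)).ereal_toReal

theorem abs_clampToReal_le (hk : 0 ≤ k) : |clampToReal k a| ≤ k := by
  rw [abs_le, ← EReal.coe_le_coe_iff, ← EReal.coe_le_coe_iff, coe_clampToReal]
  exact ⟨le_max_left _ _, max_le (by exact_mod_cast neg_le_self hk) (min_le_left _ _)⟩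

theorem clampToReal_coe {x : ℝ} (hx : |x| ≤ k) : clampToReal k x = x := by
  obtain ⟨hlow, hup⟩ := abs_le.1 hx
  rw [← EReal.coe_eq_coe_iff, coe_clampToReal, min_eq_right (by exact_mod_cast hup),
    max_eq_right (by exact_mod_cast hlow)]

theorem clampToReal_of_lt (ha : a < -k) : clampToReal k a = -k := by
  rw [← EReal.coe_eq_coe_iff, coe_clampToReal, max_eq_left ((min_le_right _ _).trans ha.le),
    EReal.coe_neg]

theorem coe_clampToReal_le (ha : -k ≤ a) : (clampToReal k a : EReal) ≤ a := by
  rw [coe_clampToReal]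
  exact max_le ha (min_le_right _ _)

theorem clampToReal_add_clampToReal_le (hk : 0 ≤ k) (hc : 0 ≤ c) (h : a + b ≤ c) :
    (clampToReal k a : EReal) + clampToReal k b ≤ c := by
  have hlow : ∀ a' b' : EReal, b' < -k → (clampToReal k a' : EReal) + clampToReal k b' ≤ c := by
    intro a' b' hb'
    refine le_trans ?_ hc
    rw [← EReal.coe_add, clampToReal_of_lt hb']
    exact_mod_cast by linarith [(abs_le.1 (abs_clampToReal_le (a := a') hk)).2]
  by_cases ha : -(k : EReal) ≤ a
  · by_cases hb : -(k : EReal) ≤ b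
    · exact (add_le_add (coe_clampToReal_le ha) (coe_clampToReal_le hb)).trans h
    · exact hlow a b (not_le.1 hb)
  · rw [add_comm]
    exact hlow b a (not_le.1 ha)

theorem add_le_iSup_clampToReal (ha : a ≠ ⊤) (hb : b ≠ ⊤) :
    a + b ≤ ⨆ k : ℕ, (clampToReal k a : EReal) + clampToReal k b := by
  induction a using EReal.rec with
  | bot => simp
  | top => exact absurd rfl ha
  | coe x =>
  induction b using EReal.rec with
  | bot => simp
  | top => exact absurd rfl hb
  | coe y =>
  obtain ⟨k, hk⟩ := exists_nat_ge (max |x| |y|)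
  refine le_iSup_of_le k ?_
  rw [clampToReal_coe ((le_max_left _ _).trans hk), clampToReal_coe ((le_max_right _ _).trans hk)]

end Clamp

structure IsBoundedDualPair {X Y : Type*} [MeasurableSpace X] [MeasurableSpace Y]
    (c : X × Y → ℝ≥0∞) (φ : X → ℝ) (ψ : Y → ℝ) : Prop where
  measurable_fst : Measurable φ
  measurable_snd : Measurable ψ
  bounded_fst : ∃ B, ∀ x, |φ x| ≤ B
  bounded_snd : ∃ B, ∀ y, |ψ y| ≤ B
  add_le : ∀ x y, (φ x : EReal) + ψ y ≤ c (x, y)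

namespace IsBoundedDualPair

variable {X Y : Type*} [MeasurableSpace X] [MeasurableSpace Y] {c : X × Y → ℝ≥0∞}
  {φ : X → ℝ} {ψ : Y → ℝ}

theorem memLp_fst (h : IsBoundedDualPair c φ ψ) {p : ℝ≥0∞} (μ : Measure X) [IsFiniteMeasure μ] :
    MemLp φ p μ :=
  let ⟨B, hB⟩ := h.bounded_fst
  .of_bound h.measurable_fst.aestronglyMeasurable B (ae_of_all _ hB)

theorem memLp_snd (h : IsBoundedDualPair c φ ψ) {p : ℝ≥0∞} (ν : Measure Y) [IsFiniteMeasure ν] :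
    MemLp ψ p ν :=
  let ⟨B, hB⟩ := h.bounded_snd
  .of_bound h.measurable_snd.aestronglyMeasurable B (ae_of_all _ hB)

theorem zero : IsBoundedDualPair c 0 0 where
  measurable_fst := measurable_const
  measurable_snd := measurable_const
  bounded_fst := ⟨0, by simp⟩
  bounded_snd := ⟨0, by simp⟩
  add_le x y := by simpa using EReal.coe_ennreal_nonneg _

theorem clampToReal {φ : X → EReal} {ψ : Y → EReal} (hφ : Measurable φ) (hψ : Measurable ψ)
    (hle : ∀ x y, φ x + ψ y ≤ c (x, y)) {k : ℝ} (hk : 0 ≤ k) :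
    IsBoundedDualPair c (clampToReal k ∘ φ) (clampToReal k ∘ ψ) where
  measurable_fst := measurable_clampToReal.comp hφ
  measurable_snd := measurable_clampToReal.comp hψ
  bounded_fst := ⟨k, fun _ => abs_clampToReal_le hk⟩
  bounded_snd := ⟨k, fun _ => abs_clampToReal_le hk⟩
  add_le x y := clampToReal_add_clampToReal_le hk (EReal.coe_ennreal_nonneg _) (hle x y)

end IsBoundedDualPair

theorem eventually_add_le_of_forall_isBoundedDualPair {X Y : Type*} [MeasurableSpace X]
    [MeasurableSpace Y] {μ : Measure X} {ν : Measure Y} {c : X × Y → ℝ≥0∞} {s : X × Y → EReal}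
    (hs : ∀ φ ψ, IsBoundedDualPair c φ ψ → ∀ᶠ p in ae μ ×ˢ ae ν, (φ p.1 : EReal) + ψ p.2 ≤ s p)
    {φ : X → EReal} {ψ : Y → EReal} (hφ : Measurable φ) (hψ : Measurable ψ)
    (hφ_top : ∀ x, φ x ≠ ⊤) (hψ_top : ∀ y, ψ y ≠ ⊤) (hle : ∀ x y, φ x + ψ y ≤ c (x, y)) :
    ∀ᶠ p in ae μ ×ˢ ae ν, φ p.1 + ψ p.2 ≤ s p := by
  have hclamp := fun k : ℕ => hs _ _ (.clampToReal hφ hψ hle k.cast_nonneg)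
  filter_upwards [eventually_countable_forall.2 hclamp] with p hp
  exact (add_le_iSup_clampToReal (hφ_top _) (hψ_top _)).trans (iSup_le hp)

theorem SatI.eventually_iSup_le {X Y : Type*} [MeasurableSpace X] [MeasurableSpace Y]
    {μ : Measure X} {ν : Measure Y} {c d : X × Y → ℝ≥0∞} (hd : SatI μ ν c d)
    {e : ℕ → (X → ℝ) × (Y → ℝ)} (he : ∀ n, IsBoundedDualPair c (e n).1 (e n).2) :
    ∀ᶠ p in ae μ ×ˢ ae ν, ⨆ n, ((e n).1 p.1 : EReal) + (e n).2 p.2 ≤ d p := by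
  have hn (n : ℕ) := lNeg_setOf_not_iff.1 (hd _ _ (he n).measurable_fst.coe_real_ereal
    (he n).measurable_snd.coe_real_ereal (fun _ => EReal.coe_ne_top _)
    (fun _ => EReal.coe_ne_top _) (he n).add_le)
  filter_upwards [eventually_countable_forall.2 hn] with p hp
  exact iSup_le hp

theorem stmt7_general {X Y : Type*}
    [TopologicalSpace X] [PolishSpace X] [MeasurableSpace X] [BorelSpace X]
    [TopologicalSpace Y] [PolishSpace Y] [MeasurableSpace Y] [BorelSpace Y]
    (μ : Measure X) (ν : Measure Y) [IsProbabilityMeasure μ] [IsProbabilityMeasure ν]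
    (c : X × Y → ENNReal) :
    ∃ cr : X × Y → ENNReal, Measurable cr ∧ IsRectification μ ν c cr ∧
      ∃ φ : ℕ → X → ℝ, ∃ ψ : ℕ → Y → ℝ,
        (∀ n, Measurable (φ n)) ∧ (∀ n, Measurable (ψ n)) ∧
        (∀ n, ∃ B : ℝ, ∀ x, |φ n x| ≤ B) ∧ (∀ n, ∃ B : ℝ, ∀ y, |ψ n y| ≤ B) ∧
        (∀ n x y, (φ n x : EReal) + (ψ n y : EReal) ≤ (c (x, y) : EReal)) ∧
        (∀ p : X × Y, (cr p : EReal) = ⨆ n, ((φ n p.1 : EReal) + (ψ n p.2 : EReal))) := by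
  obtain ⟨e, he, he0, hdom⟩ := exists_seq_eventually_le_iSup (μ := μ) (ν := ν)
    (S := {f | IsBoundedDualPair c f.1 f.2}) (fun f hf => ⟨hf.memLp_fst μ, hf.memLp_snd ν⟩)
    (f₀ := 0) IsBoundedDualPair.zero
  set s : X × Y → EReal := fun p => ⨆ n, ((e n).1 p.1 : EReal) + (e n).2 p.2
  have hcr (p : X × Y) : ((s p).toENNReal : EReal) = s p :=
    EReal.coe_toENNReal (le_iSup_of_le 0 (by simp [he0]))
  refine ⟨fun p => (s p).toENNReal, ?_, ⟨fun φ ψ hφ hψ hφ_top hψ_top hle => ?_, fun d hd => ?_⟩,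
    fun n => (e n).1, fun n => (e n).2, fun n => (he n).measurable_fst,
    fun n => (he n).measurable_snd, fun n => (he n).bounded_fst, fun n => (he n).bounded_snd,
    fun n => (he n).add_le, hcr⟩
  · exact (Measurable.iSup fun n => ((he n).measurable_fst.comp measurable_fst).coe_real_ereal.add
      ((he n).measurable_snd.comp measurable_snd).coe_real_ereal).ereal_toENNReal
  · simp only [lNeg_setOf_not_iff, hcr]
    exact eventually_add_le_of_forall_isBoundedDualPair (fun φ ψ h => hdom (φ, ψ) h)
      hφ hψ hφ_top hψ_top hle
  · rw [lNeg_setOf_not_iff]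
    filter_upwards [hd.eventually_iSup_le he] with p hp
    rwa [← EReal.coe_ennreal_le_coe_ennreal_iff, hcr]

theorem stmt7 {X Y : Type*}
    [TopologicalSpace X] [PolishSpace X] [MeasurableSpace X] [BorelSpace X]
    [TopologicalSpace Y] [PolishSpace Y] [MeasurableSpace Y] [BorelSpace Y]
    (μ : Measure X) (ν : Measure Y) [IsProbabilityMeasure μ] [IsProbabilityMeasure ν]
    (c : X × Y → ENNReal) (hc : Measurable c) :
    ∃ cr : X × Y → ENNReal, Measurable cr ∧ IsRectification μ ν c cr ∧
      ∃ φ : ℕ → X → ℝ, ∃ ψ : ℕ → Y → ℝ,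
        (∀ n, Measurable (φ n)) ∧ (∀ n, Measurable (ψ n)) ∧
        (∀ n, ∃ B : ℝ, ∀ x, |φ n x| ≤ B) ∧ (∀ n, ∃ B : ℝ, ∀ y, |ψ n y| ≤ B) ∧
        (∀ n x y, (φ n x : EReal) + (ψ n y : EReal) ≤ (c (x, y) : EReal)) ∧
        (∀ p : X × Y, (cr p : EReal) = ⨆ n, ((φ n p.1 : EReal) + (ψ n p.2 : EReal))) :=
  stmt7_general μ ν c
end

section
/- Let X, Y be Polish spaces with Borel probability measures μ, ν, and let c : X × Y → [0,∞] be lower semi-continuous. Then the rectification c_r of c satisfies c_r = c L-almost surely. -/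
open MeasureTheory Set

/-!
Since `c` itself satisfies property (i), minimality gives `c_r ≤ c` `L`-a.s. Conversely, a lower
semi-continuous `c` is the pointwise supremum of the step functions `e_{U,V} · 1_{U × V}`, where
`U`, `V` range over countable bases and `e_{U,V}` is the infimum of `c` on `U × V`. Each of
them (truncated to be finite) is a Borel dual pair `φ ⊕ ψ ≤ c` with `φ = e_{U,V}` on `U`,
`ψ = 0` on `V` and both `⊥` elsewhere, so property (i) bounds it by `c_r` off an `L`-null set;
a countable union of `L`-null sets is `L`-null, hence `c ≤ c_r` `L`-a.s.
-/

open TopologicalSpace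

namespace LNeg

variable {X Y : Type*} [MeasurableSpace X] [MeasurableSpace Y] {μ : Measure X} {ν : Measure Y}

lemma mono {A B : Set (X × Y)} (hAB : A ⊆ B) (hB : LNeg μ ν B) : LNeg μ ν A := by
  obtain ⟨M, N, hM, hN, hμ, hν, hB⟩ := hB
  exact ⟨M, N, hM, hN, hμ, hν, hAB.trans hB⟩

lemma iUnion {ι : Type*} [Countable ι] {A : ι → Set (X × Y)} (hA : ∀ i, LNeg μ ν (A i)) :
    LNeg μ ν (⋃ i, A i) := by
  choose M N hM hN hμ hν hA using hA
  refine ⟨⋃ i, M i, ⋃ i, N i, .iUnion hM, .iUnion hN, measure_iUnion_null hμ,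
    measure_iUnion_null hν, iUnion_subset fun i p hp => ?_⟩
  rcases hA i hp with h | h
  · exact Or.inl ⟨mem_iUnion.2 ⟨i, h.1⟩, h.2⟩
  · exact Or.inr ⟨h.1, mem_iUnion.2 ⟨i, h.2⟩⟩

lemma union {A B : Set (X × Y)} (hA : LNeg μ ν A) (hB : LNeg μ ν B) :
    LNeg μ ν (A ∪ B) := by
  rw [union_eq_iUnion]
  exact iUnion (Bool.forall_bool.2 ⟨hB, hA⟩)

end LNeg

section Rectification

variable {X Y : Type*} [MeasurableSpace X] [MeasurableSpace Y] {μ : Measure X} {ν : Measure Y}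
  {c d : X × Y → ENNReal}

lemma satI_self : SatI μ ν c c := fun _ _ _ _ _ _ hle =>
  ⟨∅, ∅, .empty, .empty, measure_empty, measure_empty, fun p hp => absurd (hle p.1 p.2) hp⟩

lemma IsRectification.lneg_not_le {cr : X × Y → ENNReal} (h : IsRectification μ ν c cr) :
    LNeg μ ν {p | ¬ cr p ≤ c p} :=
  h.2 c satI_self

lemma SatI.lneg_mem_prod_lt (hd : SatI μ ν c d) {U : Set X} {V : Set Y} (hU : MeasurableSet U)
    (hV : MeasurableSet V) {a : ENNReal} (ha : a ≠ ⊤) (hac : ∀ p ∈ U ×ˢ V, a ≤ c p) :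
    LNeg μ ν {p | p ∈ U ×ˢ V ∧ d p < a} := by
  classical
  let φ : X → EReal := fun x => if x ∈ U then (a : EReal) else ⊥
  let ψ : Y → EReal := fun y => if y ∈ V then 0 else ⊥
  have hφψ : ∀ x y, φ x + ψ y ≤ (c (x, y) : EReal) := by
    intro x y
    by_cases hx : x ∈ U
    · by_cases hy : y ∈ V
      · simpa [φ, ψ, hx, hy] using hac (x, y) ⟨hx, hy⟩
      · simp [φ, ψ, hy]
    · simp [φ, hx]
  refine (hd φ ψ (measurable_const.ite hU measurable_const)
    (measurable_const.ite hV measurable_const) (fun x => ?_) (fun y => ?_) hφψ).mono ?_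
  · by_cases hx : x ∈ U <;> simp [φ, hx, ha]
  · by_cases hy : y ∈ V <;> simp [ψ, hy]
  · rintro p ⟨⟨hx, hy⟩, hlt⟩
    simpa [φ, ψ, hx, hy] using hlt

end Rectification

lemma LowerSemicontinuous.iSup_iInf_prod_eq {X Y : Type*} [TopologicalSpace X]
    [TopologicalSpace Y] {c : X × Y → ENNReal} (hc : LowerSemicontinuous c) {bX : Set (Set X)}
    {bY : Set (Set Y)} (hbX : IsTopologicalBasis bX) (hbY : IsTopologicalBasis bY) (p : X × Y) :
    ⨆ (U ∈ bX) (V ∈ bY) (_ : p ∈ U ×ˢ V), ⨅ q ∈ U ×ˢ V, c q = c p := by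
  refine le_antisymm (iSup₂_le fun U _ => iSup₂_le fun V _ => iSup_le fun hp => iInf₂_le p hp)
    (le_of_forall_lt fun t ht => ?_)
  obtain ⟨s, hs, hlt⟩ := exists_between ht
  obtain ⟨_, ⟨U, hU, V, hV, rfl⟩, hp, hsub⟩ := (hbX.prod hbY).mem_nhds_iff.1 (hc p s hlt)
  calc t < s := hs
    _ ≤ ⨅ q ∈ U ×ˢ V, c q := le_iInf₂ fun q hq => (hsub hq).le
    _ ≤ _ := le_iSup₂_of_le U hU <| le_iSup₂_of_le V hV <|
      le_iSup (fun _ : p ∈ U ×ˢ V => ⨅ q ∈ U ×ˢ V, c q) hp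

lemma SatI.lneg_lt_of_lowerSemicontinuous {X Y : Type*} [TopologicalSpace X]
    [SecondCountableTopology X] [MeasurableSpace X] [OpensMeasurableSpace X] [TopologicalSpace Y]
    [SecondCountableTopology Y] [MeasurableSpace Y] [OpensMeasurableSpace Y] {μ : Measure X}
    {ν : Measure Y} {c d : X × Y → ENNReal} (hd : SatI μ ν c d) (hc : LowerSemicontinuous c) :
    LNeg μ ν {p | d p < c p} := by
  obtain ⟨bX, hbXc, -, hbX⟩ := exists_countable_basis X
  obtain ⟨bY, hbYc, -, hbY⟩ := exists_countable_basis Y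
  have := hbXc.to_subtype
  have := hbYc.to_subtype
  let a : bX × bY × ℕ → ENNReal := fun i => min (⨅ q ∈ i.1.1 ×ˢ i.2.1.1, c q) i.2.2
  have hA (i : bX × bY × ℕ) : LNeg μ ν {p | p ∈ i.1.1 ×ˢ i.2.1.1 ∧ d p < a i} :=
    hd.lneg_mem_prod_lt (hbX.isOpen i.1.2).measurableSet (hbY.isOpen i.2.1.2).measurableSet
      (by simp [a]) fun p hp => (min_le_left _ _).trans (iInf₂_le p hp)
  refine (LNeg.iUnion hA).mono fun p (hp : d p < c p) => ?_
  rw [← hc.iSup_iInf_prod_eq hbX hbY p] at hp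
  simp only [lt_iSup_iff] at hp
  obtain ⟨U, hU, V, hV, hpUV, hlt⟩ := hp
  obtain ⟨k, hk⟩ := ENNReal.exists_nat_gt (hlt.trans_le le_top).ne
  exact mem_iUnion.2 ⟨(⟨U, hU⟩, ⟨V, hV⟩, k), hpUV, lt_min hlt hk⟩

theorem stmt10_general {X Y : Type*}
    [TopologicalSpace X] [PolishSpace X] [MeasurableSpace X] [BorelSpace X]
    [TopologicalSpace Y] [PolishSpace Y] [MeasurableSpace Y] [BorelSpace Y]
    (μ : Measure X) (ν : Measure Y)
    (c : X × Y → ENNReal) (hc : LowerSemicontinuous c) (cr : X × Y → ENNReal)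
    (h : IsRectification μ ν c cr) :
    LNeg μ ν {p : X × Y | cr p ≠ c p} := by
  refine (h.lneg_not_le.union (h.1.lneg_lt_of_lowerSemicontinuous hc)).mono fun p hp => ?_
  exact (le_or_gt (cr p) (c p)).elim (fun hle => Or.inr (hle.lt_of_ne hp))
    fun hlt => Or.inl hlt.not_ge

/-- If `c` is lower semi-continuous, then its rectification coincides with `c`
`L`-almost surely. -/
theorem stmt10 {X Y : Type*}
    [TopologicalSpace X] [PolishSpace X] [MeasurableSpace X] [BorelSpace X]
    [TopologicalSpace Y] [PolishSpace Y] [MeasurableSpace Y] [BorelSpace Y]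
    (μ : Measure X) (ν : Measure Y) [IsProbabilityMeasure μ] [IsProbabilityMeasure ν]
    (c : X × Y → ENNReal) (hc : LowerSemicontinuous c) (cr : X × Y → ENNReal)
    (h : IsRectification μ ν c cr) :
    LNeg μ ν {p : X × Y | cr p ≠ c p} :=
  stmt10_general μ ν c hc cr h
end

section
/- Let c : X × Y → [0,∞] be lower semi-continuous, where X and Y are second-countable topological spaces. Let (U_n) and (V_m) be countable bases of X and Y, and set e_{n,m} := inf{c(x,y) : (x,y) ∈ U_n × V_m}. Then c(x,y) = sup{e_{n,m} : x ∈ U_n, y ∈ V_m} for all (x,y), and in particular c is a countable supremum of functions of the form φ ⊕ ψ with φ ⊕ ψ ≤ c, where φ, ψ take only the values e_{n,m} and -∞ (or a value making the sum ≤ 0 off U_n × V_m). -/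
/-!
If `a < c (x, y)`, lower semi-continuity gives an open neighbourhood of `(x, y)` on which
`c > a`, and it contains a basic rectangle `U n ×ˢ V m` around `(x, y)`, so `e n m ≥ a`; the
reverse inequality is trivial. For the second part, pass to `EReal`-valued `c`, where the empty
supremum is `⊥`, and realise the term of index `(n, m)` as `φ x + ψ y`, with `φ = e n m` on
`U n`, `ψ = 0` on `V m`, and `⊥` elsewhere.
-/

open Set TopologicalSpace

theorem LowerSemicontinuous.eq_iSup_iInf_prod {X Y ι κ α : Type*} [TopologicalSpace X]
    [TopologicalSpace Y] [CompleteLinearOrder α] [DenselyOrdered α] {c : X × Y → α}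
    (hc : LowerSemicontinuous c) {U : ι → Set X} {V : κ → Set Y}
    (hU : IsTopologicalBasis (range U)) (hV : IsTopologicalBasis (range V)) (x : X) (y : Y) :
    c (x, y) = ⨆ n, ⨆ m, ⨆ (_ : x ∈ U n ∧ y ∈ V m), ⨅ p ∈ U n ×ˢ V m, c p := by
  refine le_antisymm (le_of_forall_lt_imp_le_of_dense fun a ha => ?_)
    (iSup₂_le fun n m => iSup_le fun h => iInf₂_le (x, y) h)
  obtain ⟨t, hct, ht, hxyt⟩ := mem_nhds_iff.mp (hc (x, y) a ha)
  obtain ⟨_, ⟨_, ⟨n, rfl⟩, _, ⟨m, rfl⟩, rfl⟩, ⟨hxUn, hyVm⟩, hUVt⟩ :=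
    (hU.prod hV).exists_subset_of_mem_open hxyt ht
  calc a ≤ ⨅ p ∈ U n ×ˢ V m, c p := le_iInf₂ fun p hp => (hct (hUVt hp)).le
    _ ≤ _ := le_iSup₂_of_le n m (le_iSup (fun _ => _) ⟨hxUn, hyVm⟩)

theorem EReal.ite_add_ite_zero_bot (p q : Prop) [Decidable p] [Decidable q] (a : EReal) :
    ((if p then a else ⊥) + if q then 0 else ⊥) = ⨆ (_ : p ∧ q), a := by
  rw [iSup_eq_if]
  split_ifs <;> simp_all

theorem stmt11_general {X Y : Type*} [TopologicalSpace X] [TopologicalSpace Y]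
    (c : X × Y → ENNReal) (hc : LowerSemicontinuous c)
    (U : ℕ → Set X) (V : ℕ → Set Y)
    (hU : TopologicalSpace.IsTopologicalBasis (Set.range U))
    (hV : TopologicalSpace.IsTopologicalBasis (Set.range V)) :
    (∀ x y, c (x, y) =
      ⨆ n, ⨆ m, ⨆ (_ : x ∈ U n ∧ y ∈ V m), ⨅ p ∈ U n ×ˢ V m, c p) ∧
    ∃ φ : ℕ → X → EReal, ∃ ψ : ℕ → Y → EReal,
      (∀ k x y, φ k x + ψ k y ≤ (c (x, y) : EReal)) ∧
      (∀ x y, (c (x, y) : EReal) = ⨆ k, (φ k x + ψ k y)) := by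
  classical
  have hc' : LowerSemicontinuous fun p => (c p : EReal) :=
    continuous_coe_ennreal_ereal.comp_lowerSemicontinuous hc EReal.coe_ennreal_strictMono.monotone
  set e : ℕ → ℕ → EReal := fun n m => ⨅ p ∈ U n ×ˢ V m, (c p : EReal)
  set φ : ℕ → X → EReal := fun k x => if x ∈ U k.unpair.1 then e k.unpair.1 k.unpair.2 else ⊥
  set ψ : ℕ → Y → EReal := fun k y => if y ∈ V k.unpair.2 then 0 else ⊥
  have hφψ (k : ℕ) (x : X) (y : Y) :
      φ k x + ψ k y = ⨆ (_ : x ∈ U k.unpair.1 ∧ y ∈ V k.unpair.2), e k.unpair.1 k.unpair.2 :=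
    EReal.ite_add_ite_zero_bot _ _ _
  refine ⟨hc.eq_iSup_iInf_prod hU hV, φ, ψ, fun k x y => ?_, fun x y => ?_⟩
  · rw [hφψ]
    exact iSup_le fun h => iInf₂_le (x, y) h
  · rw [iSup_congr (hφψ · x y), iSup_unpair (fun n m => ⨆ (_ : x ∈ U n ∧ y ∈ V m), e n m)]
    exact hc'.eq_iSup_iInf_prod hU hV x y

/-- A lower semi-continuous cost on a product of second-countable spaces is the supremum of
the constants `e_{n,m} = inf over U_n × V_m of c` over the basis rectangles containing the
point; in particular it is a countable supremum of functions `φ ⊕ ψ ≤ c`. -/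
theorem stmt11 {X Y : Type*} [TopologicalSpace X] [TopologicalSpace Y]
    [SecondCountableTopology X] [SecondCountableTopology Y]
    (c : X × Y → ENNReal) (hc : LowerSemicontinuous c)
    (U : ℕ → Set X) (V : ℕ → Set Y)
    (hU : TopologicalSpace.IsTopologicalBasis (Set.range U))
    (hV : TopologicalSpace.IsTopologicalBasis (Set.range V)) :
    (∀ x y, c (x, y) =
      ⨆ n, ⨆ m, ⨆ (_ : x ∈ U n ∧ y ∈ V m), ⨅ p ∈ U n ×ˢ V m, c p) ∧
    ∃ φ : ℕ → X → EReal, ∃ ψ : ℕ → Y → EReal,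
      (∀ k x y, φ k x + ψ k y ≤ (c (x, y) : EReal)) ∧
      (∀ x y, (c (x, y) : EReal) = ⨆ k, (φ k x + ψ k y)) :=
  stmt11_general c hc U V hU hV
end

section
/- Let X, Y be Polish spaces, μ, ν Borel probability measures, and let g : X × Y → [0,∞] be of the form g = sup_n (φ_n ⊕ ψ_n) with φ_n : X → ℝ, ψ_n : Y → ℝ bounded Borel. Then the functional π ↦ ∫∫ g dπ is sequentially lower semi-continuous on Π(μ,ν) with respect to weak* convergence, even though g itself need not be lower semi-continuous on X × Y. -/
/-!
Write `g = ⨆ N, G_N` with `G_N = max_{n ≤ N} (φ_n ⊕ ψ_n)⁺` (`supOplus φ ψ N`), so that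
`∫ g dπ = ⨆ N, ∫ G_N dπ` by monotone convergence and it suffices to show that each
`π ↦ ∫ G_N dπ` is lower semicontinuous on `Π(μ, ν)`. Approximate `φ_n` in `L¹(μ)` and `ψ_n` in
`L¹(ν)` by bounded continuous `u_n`, `v_n`. Then `G_N` differs from the bounded continuous
`max_{n ≤ N} (u_n ⊕ v_n)⁺` by at most `∑_n |φ_n - u_n| ⊕ |ψ_n - v_n|`, whose integral against a
coupling only depends on the marginals `μ`, `ν`, hence is small uniformly on `Π(μ, ν)`. So
`π ↦ ∫ G_N dπ` is a uniform limit on `Π(μ, ν)` of weak*-continuous functionals.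
-/

open MeasureTheory Filter Topology BoundedContinuousFunction
open scoped ENNReal

theorem ENNReal.le_liminf_of_forall_approx {a : ℝ≥0∞} {b : ℕ → ℝ≥0∞}
    (h : ∀ ε : ℝ≥0∞, ε ≠ 0 → ∃ (a' : ℝ≥0∞) (b' : ℕ → ℝ≥0∞),
      Tendsto b' atTop (𝓝 a') ∧ a ≤ a' + ε ∧ ∀ k, b' k ≤ b k + ε) :
    a ≤ liminf b atTop := by
  refine ENNReal.le_of_forall_pos_le_add fun ε hε _ => ?_
  obtain ⟨a', b', hb', ha, hb⟩ := h (ε / 2) (by simpa using hε.ne')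
  calc a ≤ liminf b' atTop + ε / 2 := by rwa [hb'.liminf_eq]
    _ ≤ liminf (fun k => b k + ε / 2) atTop + ε / 2 := by
        gcongr; exact liminf_le_liminf (.of_forall hb)
    _ = liminf b atTop + ε := by
        rw [liminf_add_const _ _ _ (by isBoundedDefault) (by isBoundedDefault), add_assoc,
          ENNReal.add_halves]

theorem ENNReal.eq_iSup_ofReal_of_coe_eq_iSup {x : ℝ≥0∞} {a : ℕ → ℝ}
    (h : (x : EReal) = ⨆ n, (a n : EReal)) : x = ⨆ n, ENNReal.ofReal (a n) := by
  rw [← EReal.toENNReal_coe (x := x), h, Monotone.map_iSup_of_continuousAt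
    EReal.continuous_toENNReal.continuousAt (fun _ _ => EReal.toENNReal_le_toENNReal)
    EReal.toENNReal_bot]
  rfl

theorem ENNReal.ofReal_le_ofReal_add_enorm_sub (a b : ℝ) :
    ENNReal.ofReal a ≤ ENNReal.ofReal b + ‖a - b‖ₑ := by
  rw [Real.enorm_eq_ofReal_abs]
  exact (ENNReal.ofReal_le_ofReal (by linarith [le_abs_self (a - b)])).trans
    ENNReal.ofReal_add_le

section SupOplus

variable {X Y : Type*}

noncomputable def supOplus (φ : ℕ → X → ℝ) (ψ : ℕ → Y → ℝ) (N : ℕ) (p : X × Y) : ℝ≥0∞ :=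
  partialSups (fun n => ENNReal.ofReal (φ n p.1 + ψ n p.2)) N

variable {φ u : ℕ → X → ℝ} {ψ v : ℕ → Y → ℝ}

theorem monotone_supOplus (p : X × Y) : Monotone fun N => supOplus φ ψ N p :=
  partialSups_monotone _

theorem iSup_supOplus (p : X × Y) :
    ⨆ N, supOplus φ ψ N p = ⨆ n, ENNReal.ofReal (φ n p.1 + ψ n p.2) :=
  iSup_partialSups_eq _

theorem measurable_supOplus [MeasurableSpace X] [MeasurableSpace Y]
    (hφ : ∀ n, Measurable (φ n)) (hψ : ∀ n, Measurable (ψ n)) (N : ℕ) :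
    Measurable (supOplus φ ψ N) := by
  change Measurable fun p => supOplus φ ψ N p
  simp only [supOplus, partialSups_eq_sup'_range]
  exact Finset.measurable_range_sup'' fun n _ =>
    (((hφ n).comp measurable_fst).add ((hψ n).comp measurable_snd)).ennreal_ofReal

theorem lintegral_eq_iSup_lintegral_supOplus [MeasurableSpace X] [MeasurableSpace Y]
    (hφ : ∀ n, Measurable (φ n)) (hψ : ∀ n, Measurable (ψ n))
    {g : X × Y → ℝ≥0∞} (hg : ∀ p, g p = ⨆ n, ENNReal.ofReal (φ n p.1 + ψ n p.2))
    (ρ : Measure (X × Y)) :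
    ∫⁻ p, g p ∂ρ = ⨆ N, ∫⁻ p, supOplus φ ψ N p ∂ρ := by
  simp_rw [hg, ← iSup_supOplus]
  exact lintegral_iSup (measurable_supOplus hφ hψ) fun _ _ hMN p => monotone_supOplus p hMN

theorem supOplus_le_add_tsum (N : ℕ) (p : X × Y) :
    supOplus φ ψ N p ≤
      supOplus u v N p + ∑' n, (‖φ n p.1 - u n p.1‖ₑ + ‖ψ n p.2 - v n p.2‖ₑ) := by
  refine partialSups_le _ _ _ fun n hn => ?_
  calc ENNReal.ofReal (φ n p.1 + ψ n p.2)
      ≤ ENNReal.ofReal (u n p.1 + v n p.2) + ‖(φ n p.1 - u n p.1) + (ψ n p.2 - v n p.2)‖ₑ := by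
        rw [← add_sub_add_comm]; exact ENNReal.ofReal_le_ofReal_add_enorm_sub _ _
    _ ≤ supOplus u v N p + ∑' n, (‖φ n p.1 - u n p.1‖ₑ + ‖ψ n p.2 - v n p.2‖ₑ) :=
        add_le_add (le_partialSups_of_le (fun n => ENNReal.ofReal (u n p.1 + v n p.2)) hn)
          ((enorm_add_le _ _).trans (ENNReal.le_tsum n))

theorem lintegral_supOplus_le_add [MeasurableSpace X] [MeasurableSpace Y]
    {μ : Measure X} {ν : Measure Y} {ρ : Measure (X × Y)}
    (hρX : ρ.map Prod.fst = μ) (hρY : ρ.map Prod.snd = ν)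
    (hφ : ∀ n, Measurable (φ n)) (hψ : ∀ n, Measurable (ψ n))
    (hu : ∀ n, Measurable (u n)) (hv : ∀ n, Measurable (v n)) {ε : ℝ≥0∞}
    (hε : ∑' n, (∫⁻ x, ‖φ n x - u n x‖ₑ ∂μ + ∫⁻ y, ‖ψ n y - v n y‖ₑ ∂ν) ≤ ε) (N : ℕ) :
    ∫⁻ p, supOplus φ ψ N p ∂ρ ≤ ∫⁻ p, supOplus u v N p ∂ρ + ε := by
  have hX n : Measurable fun x => ‖φ n x - u n x‖ₑ := ((hφ n).sub (hu n)).enorm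
  have hY n : Measurable fun y => ‖ψ n y - v n y‖ₑ := ((hψ n).sub (hv n)).enorm
  have hXY n : ∫⁻ p, (‖φ n p.1 - u n p.1‖ₑ + ‖ψ n p.2 - v n p.2‖ₑ) ∂ρ =
      ∫⁻ x, ‖φ n x - u n x‖ₑ ∂μ + ∫⁻ y, ‖ψ n y - v n y‖ₑ ∂ν := by
    rw [lintegral_add_left (by fun_prop), ← hρX, ← hρY,
      lintegral_map (hX n) measurable_fst, lintegral_map (hY n) measurable_snd]
  calc ∫⁻ p, supOplus φ ψ N p ∂ρ
      ≤ ∫⁻ p, supOplus u v N p + ∑' n, (‖φ n p.1 - u n p.1‖ₑ + ‖ψ n p.2 - v n p.2‖ₑ) ∂ρ :=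
        lintegral_mono (supOplus_le_add_tsum N)
    _ = ∫⁻ p, supOplus u v N p ∂ρ +
          ∑' n, (∫⁻ x, ‖φ n x - u n x‖ₑ ∂μ + ∫⁻ y, ‖ψ n y - v n y‖ₑ ∂ν) := by
        rw [lintegral_add_left (measurable_supOplus hu hv N), lintegral_tsum fun n => by fun_prop]
        simp only [hXY]
    _ ≤ _ := by gcongr

theorem exists_boundedContinuous_supOplus_eq [TopologicalSpace X] [TopologicalSpace Y]
    (u : ℕ → X →ᵇ ℝ) (v : ℕ → Y →ᵇ ℝ) (N : ℕ) :
    ∃ F : X × Y →ᵇ ℝ, ∀ p, supOplus (fun n => u n) (fun n => v n) N p = ENNReal.ofReal (F p) := by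
  let f n : X × Y →ᵇ ℝ := (u n).compContinuous ⟨Prod.fst, continuous_fst⟩ +
    (v n).compContinuous ⟨Prod.snd, continuous_snd⟩
  induction N with
  | zero => exact ⟨f 0, fun p => partialSups_zero _⟩
  | succ N ih =>
    obtain ⟨F, hF⟩ := ih
    refine ⟨F ⊔ f (N + 1), fun p => ?_⟩
    rw [supOplus, ← Order.succ_eq_add_one, partialSups_succ, ← supOplus, hF]
    simp [f]

end SupOplus

theorem exists_boundedContinuous_tsum_lintegral_enorm_sub_le {X : Type*} [TopologicalSpace X]
    [NormalSpace X] [MeasurableSpace X] [BorelSpace X] {μ : Measure X} [μ.WeaklyRegular]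
    {φ : ℕ → X → ℝ} (hφ : ∀ n, Integrable (φ n) μ) {ε : ℝ≥0∞} (hε : ε ≠ 0) :
    ∃ u : ℕ → X →ᵇ ℝ, ∑' n, ∫⁻ x, ‖φ n x - u n x‖ₑ ∂μ ≤ ε := by
  obtain ⟨δ, hδ, hδε⟩ := ENNReal.exists_pos_sum_of_countable' hε ℕ
  choose u hu _ using fun n => (hφ n).exists_boundedContinuous_lintegral_sub_le (hδ n).ne'
  exact ⟨u, (ENNReal.tsum_le_tsum hu).trans hδε.le⟩

theorem tendsto_lintegral_ofReal_of_forall_tendsto_integral {Z : Type*} [TopologicalSpace Z]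
    [MeasurableSpace Z] [OpensMeasurableSpace Z] {ρ : Measure Z} {ρs : ℕ → Measure Z}
    [IsFiniteMeasure ρ] [∀ k, IsFiniteMeasure (ρs k)]
    (h : ∀ f : Z →ᵇ ℝ, Tendsto (fun k => ∫ z, f z ∂ρs k) atTop (𝓝 (∫ z, f z ∂ρ)))
    (f : Z →ᵇ ℝ) :
    Tendsto (fun k => ∫⁻ z, ENNReal.ofReal (f z) ∂ρs k) atTop
      (𝓝 (∫⁻ z, ENNReal.ofReal (f z) ∂ρ)) :=
  FiniteMeasure.tendsto_iff_forall_lintegral_tendsto.1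
    ((FiniteMeasure.tendsto_iff_forall_integral_tendsto (μs := fun k => ⟨ρs k, inferInstance⟩)
      (μ := ⟨ρ, inferInstance⟩)).2 h) f.nnrealPart

theorem isProbabilityMeasure_of_map_eq {α β : Type*} [MeasurableSpace α] [MeasurableSpace β]
    {ρ : Measure α} {μ : Measure β} [IsProbabilityMeasure μ] (f : α → β) (h : ρ.map f = μ) :
    IsProbabilityMeasure ρ :=
  have : IsProbabilityMeasure (ρ.map f) := h ▸ ‹_›
  Measure.isProbabilityMeasure_of_map f

/-- If `g = sup_n (φ_n ⊕ ψ_n)` with `φ_n, ψ_n` bounded Borel, then `π ↦ ∫∫ g dπ` is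
sequentially lower semi-continuous on the couplings of `μ` and `ν` for weak* convergence. -/
theorem stmt16 {X Y : Type*}
    [TopologicalSpace X] [PolishSpace X] [MeasurableSpace X] [BorelSpace X]
    [TopologicalSpace Y] [PolishSpace Y] [MeasurableSpace Y] [BorelSpace Y]
    (μ : Measure X) (ν : Measure Y) [IsProbabilityMeasure μ] [IsProbabilityMeasure ν]
    (g : X × Y → ENNReal) (φ : ℕ → X → ℝ) (ψ : ℕ → Y → ℝ)
    (hφ : ∀ n, Measurable (φ n)) (hψ : ∀ n, Measurable (ψ n))
    (hφb : ∀ n, ∃ B : ℝ, ∀ x, |φ n x| ≤ B) (hψb : ∀ n, ∃ B : ℝ, ∀ y, |ψ n y| ≤ B)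
    (hg : ∀ p : X × Y, (g p : EReal) = ⨆ n, ((φ n p.1 : EReal) + (ψ n p.2 : EReal)))
    (π : Measure (X × Y)) (πs : ℕ → Measure (X × Y))
    (hπ : π.map Prod.fst = μ ∧ π.map Prod.snd = ν)
    (hπs : ∀ n, (πs n).map Prod.fst = μ ∧ (πs n).map Prod.snd = ν)
    (hconv : ∀ f : BoundedContinuousFunction (X × Y) ℝ,
      Filter.Tendsto (fun n => ∫ p, f p ∂(πs n)) Filter.atTop (nhds (∫ p, f p ∂π))) :
    ∫⁻ p, g p ∂π ≤ Filter.liminf (fun n => ∫⁻ p, g p ∂(πs n)) Filter.atTop := by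
  have : IsProbabilityMeasure π := isProbabilityMeasure_of_map_eq Prod.fst hπ.1
  have (k : ℕ) : IsProbabilityMeasure (πs k) := isProbabilityMeasure_of_map_eq Prod.fst (hπs k).1
  have hφi n : Integrable (φ n) μ :=
    let ⟨B, hB⟩ := hφb n; .of_bound (hφ n).aestronglyMeasurable B (.of_forall hB)
  have hψi n : Integrable (ψ n) ν :=
    let ⟨B, hB⟩ := hψb n; .of_bound (hψ n).aestronglyMeasurable B (.of_forall hB)
  have hg' p : g p = ⨆ n, ENNReal.ofReal (φ n p.1 + ψ n p.2) :=
    ENNReal.eq_iSup_ofReal_of_coe_eq_iSup (by simpa only [EReal.coe_add] using hg p)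
  simp_rw [lintegral_eq_iSup_lintegral_supOplus hφ hψ hg']
  refine iSup_le fun N => (ENNReal.le_liminf_of_forall_approx fun ε hε => ?_).trans
    (liminf_le_liminf (.of_forall fun k => le_iSup (fun N => ∫⁻ p, supOplus φ ψ N p ∂πs k) N))
  have hε2 : ε / 2 ≠ 0 := (ENNReal.half_pos hε).ne'
  obtain ⟨u, hu⟩ := exists_boundedContinuous_tsum_lintegral_enorm_sub_le hφi hε2
  obtain ⟨v, hv⟩ := exists_boundedContinuous_tsum_lintegral_enorm_sub_le hψi hε2
  obtain ⟨F, hF⟩ := exists_boundedContinuous_supOplus_eq u v N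
  have herr : ∑' n, (∫⁻ x, ‖φ n x - u n x‖ₑ ∂μ + ∫⁻ y, ‖ψ n y - v n y‖ₑ ∂ν) ≤ ε := by
    rw [ENNReal.tsum_add, ← ENNReal.add_halves ε]; gcongr
  have herr' : ∑' n, (∫⁻ x, ‖u n x - φ n x‖ₑ ∂μ + ∫⁻ y, ‖v n y - ψ n y‖ₑ ∂ν) ≤ ε := by
    simpa only [enorm_sub_rev] using herr
  refine ⟨∫⁻ p, ENNReal.ofReal (F p) ∂π, fun k => ∫⁻ p, ENNReal.ofReal (F p) ∂πs k,
    tendsto_lintegral_ofReal_of_forall_tendsto_integral hconv F, ?_, fun k => ?_⟩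
  · simpa only [hF] using lintegral_supOplus_le_add hπ.1 hπ.2 hφ hψ
      (fun n => (u n).continuous.measurable) (fun n => (v n).continuous.measurable) herr N
  · simpa only [hF] using lintegral_supOplus_le_add (hπs k).1 (hπs k).2
      (fun n => (u n).continuous.measurable) (fun n => (v n).continuous.measurable) hφ hψ herr' N
end

section
/- Let X = Y = [0,1] with μ = ν the Lebesgue measure, and c(x,y) = 0 if (x,y) ∈ ℚ × ℚ and c(x,y) = 1 otherwise. Then the lower semi-continuous envelope of c is identically 0, while c = 1 L-almost surely; in particular the primal value is P_c = 1 and the dual value is D_c = 1, so duality holds for c even though the l.s.c. envelope of c has primal value 0. -/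
open MeasureTheory Set

open Classical in
/-- Cost which is `0` on `ℚ × ℚ` and `1` elsewhere. -/
noncomputable def c17 : ℝ × ℝ → ENNReal := fun p =>
  if p.1 ∈ Set.range ((↑) : ℚ → ℝ) ∧ p.2 ∈ Set.range ((↑) : ℚ → ℝ) then 0 else 1

/-! The cost vanishes on the dense set `ℚ × ℚ`, and the zero set of an l.s.c. function into
`ℝ≥0∞` is closed, so every l.s.c. minorant vanishes. On the other hand `{c17 ≠ 1} ⊆ ℚ × ℝ`, which
is `L`-negligible and null for every coupling since its first marginal is Lebesgue measure; hence
every coupling has cost `1`. Weak duality bounds the dual value by `1`, and the pair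
`(1_{irrationals}, 0)` attains it. -/

theorem LowerSemicontinuous.le_of_dense {X γ : Type*} [TopologicalSpace X] [LinearOrder γ]
    [TopologicalSpace γ] [OrderTopology γ] {g : X → γ} (hg : LowerSemicontinuous g)
    {D : Set X} (hD : Dense D) {y : γ} (h : ∀ x ∈ D, g x ≤ y) (x : X) : g x ≤ y :=
  (hg.isClosed_preimage y).closure_subset_iff.2 h (hD.closure_eq ▸ mem_univ x)

theorem integral_add_integral_le_of_ae_add_le {X Y : Type*} [MeasurableSpace X]
    [MeasurableSpace Y] {μ : Measure X} {ν : Measure Y} [IsProbabilityMeasure μ]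
    [IsProbabilityMeasure ν] {φ : X → ℝ} {ψ : Y → ℝ} (hφ : Integrable φ μ)
    (hψ : Integrable ψ ν) {C : ℝ} (h : ∀ᵐ x ∂μ, ∀ᵐ y ∂ν, φ x + ψ y ≤ C) :
    ∫ x, φ x ∂μ + ∫ y, ψ y ∂ν ≤ C := by
  have hφ_le : ∀ᵐ x ∂μ, φ x ≤ C - ∫ y, ψ y ∂ν := h.mono fun x hx => by
    have := integral_mono_ae hψ (integrable_const (C - φ x)) (hx.mono fun y hy => by linarith)
    rw [integral_const, probReal_univ, one_smul] at this
    linarith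
  have := integral_mono_ae hφ (integrable_const _) hφ_le
  rw [integral_const, probReal_univ, one_smul] at this
  linarith

theorem muI_ae_irrational : ∀ᵐ x ∂muI, Irrational x :=
  ae_restrict_of_ae ((countable_range ((↑) : ℚ → ℝ)).ae_notMem volume)

theorem muI_ae_mem_Icc : ∀ᵐ x ∂muI, x ∈ Icc (0 : ℝ) 1 :=
  ae_restrict_mem measurableSet_Icc

theorem c17_ratCast (q r : ℚ) : c17 ((q : ℝ), (r : ℝ)) = 0 :=
  if_pos ⟨mem_range_self q, mem_range_self r⟩

theorem c17_of_irrational_fst {p : ℝ × ℝ} (hp : Irrational p.1) : c17 p = 1 :=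
  if_neg fun h => hp h.1

theorem c17_le_one (p : ℝ × ℝ) : c17 p ≤ 1 := by
  unfold c17; split_ifs <;> simp

theorem setOf_c17_ne_one_subset :
    {p : ℝ × ℝ | c17 p ≠ 1} ⊆ range ((↑) : ℚ → ℝ) ×ˢ univ := fun _ hp =>
  ⟨not_not.1 fun h => hp (c17_of_irrational_fst h), mem_univ _⟩

theorem lintegral_c17_of_map_fst {π : Measure (ℝ × ℝ)} (hπ : π.map Prod.fst = muI) :
    ∫⁻ p, c17 p ∂π = 1 := by
  have h_ae : ∀ᵐ p ∂π, c17 p = 1 :=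
    (ae_of_ae_map measurable_fst.aemeasurable (hπ ▸ muI_ae_irrational)).mono
      fun _ hp => c17_of_irrational_fst hp
  have h_univ : π univ = 1 := by
    rw [← preimage_univ, ← Measure.map_apply measurable_fst MeasurableSet.univ, hπ, measure_univ]
  rw [lintegral_congr_ae h_ae, lintegral_const, h_univ, one_mul]

theorem add_le_one_of_coe_add_le_c17 {a b : ℝ} {p : ℝ × ℝ}
    (h : (a : EReal) + (b : EReal) ≤ (c17 p : EReal)) : a + b ≤ 1 := by
  have := h.trans (EReal.coe_ennreal_le_coe_ennreal_iff.2 (c17_le_one p))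
  exact EReal.coe_le_coe_iff.1 (by simpa using this)

theorem coe_integral_add_integral_le_one_of_le_c17 {φ ψ : ℝ → ℝ} (hφ : Integrable φ muI)
    (hψ : Integrable ψ muI)
    (h : ∀ x ∈ Icc (0 : ℝ) 1, ∀ y ∈ Icc (0 : ℝ) 1, (φ x : EReal) + ψ y ≤ c17 (x, y)) :
    ((∫ x, φ x ∂muI + ∫ y, ψ y ∂muI : ℝ) : EReal) ≤ 1 := by
  have h_ae : ∀ᵐ x ∂muI, ∀ᵐ y ∂muI, φ x + ψ y ≤ 1 := by
    filter_upwards [muI_ae_mem_Icc] with x hx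
    filter_upwards [muI_ae_mem_Icc] with y hy
    exact add_le_one_of_coe_add_le_c17 (h x hx y hy)
  exact_mod_cast integral_add_integral_le_of_ae_add_le hφ hψ h_ae

theorem stmt17 :
    -- the lower semi-continuous envelope of `c17` is identically 0
    (∀ g : ℝ × ℝ → ENNReal, LowerSemicontinuous g → (∀ p, g p ≤ c17 p) → ∀ p, g p = 0) ∧
    -- while `c17 = 1` holds L-almost surely
    LNeg muI muI {p : ℝ × ℝ | c17 p ≠ 1} ∧
    -- the primal value is 1
    (⨅ π ∈ {π : Measure (ℝ × ℝ) | π.map Prod.fst = muI ∧ π.map Prod.snd = muI},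
      ∫⁻ p, c17 p ∂π) = 1 ∧
    -- and the dual value is 1, so duality holds for `c17`
    sSup {r : EReal | ∃ φ ψ : ℝ → ℝ, Integrable φ muI ∧ Integrable ψ muI ∧
      (∀ x ∈ Set.Icc (0:ℝ) 1, ∀ y ∈ Set.Icc (0:ℝ) 1,
        (φ x : EReal) + (ψ y : EReal) ≤ (c17 (x, y) : EReal)) ∧
      r = ((∫ x, φ x ∂muI + ∫ y, ψ y ∂muI : ℝ) : EReal)} = 1 := by
  have h_null : muI (range ((↑) : ℚ → ℝ)) = 0 :=
    measure_eq_zero_iff_ae_notMem.2 muI_ae_irrational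
  have h_meas : MeasurableSet (range ((↑) : ℚ → ℝ)) := (countable_range _).measurableSet
  refine ⟨fun g hg hle p => nonpos_iff_eq_zero.1 ?_, ?_, ?_, ?_⟩
  · refine hg.le_of_dense (Rat.denseRange_cast.prod Rat.denseRange_cast) ?_ p
    rintro ⟨_, _⟩ ⟨⟨q, rfl⟩, ⟨r, rfl⟩⟩
    exact (hle _).trans (c17_ratCast q r).le
  · exact ⟨_, ∅, h_meas, .empty, h_null, measure_empty,
      setOf_c17_ne_one_subset.trans subset_union_left⟩
  · have h_prod : (muI.prod muI).map Prod.fst = muI ∧ (muI.prod muI).map Prod.snd = muI := by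
      simp [Measure.map_fst_prod, Measure.map_snd_prod]
    exact le_antisymm
      ((iInf₂_le (muI.prod muI) h_prod).trans_eq (lintegral_c17_of_map_fst h_prod.1))
      (le_iInf₂ fun π hπ => (lintegral_c17_of_map_fst hπ.1).ge)
  · refine le_antisymm (sSup_le ?_) (le_sSup ?_)
    · rintro _ ⟨φ, ψ, hφ, hψ, h_le, rfl⟩
      exact coe_integral_add_integral_le_one_of_le_c17 hφ hψ h_le
    · set φ : ℝ → ℝ := {x | Irrational x}.indicator 1
      have hφ_ae : (1 : ℝ → ℝ) =ᵐ[muI] φ :=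
        muI_ae_irrational.mono fun x hx => (indicator_of_mem hx _).symm
      refine ⟨φ, 0, (integrable_const 1).congr hφ_ae, integrable_zero _ _ _, ?_, ?_⟩
      · intro x _ y _
        by_cases hx : Irrational x
        · simp [φ, hx, c17_of_irrational_fst (p := (x, y)) hx]
        · simp [φ, hx, EReal.coe_ennreal_nonneg]
      · simp [← integral_congr_ae hφ_ae]
end

section
/- Let X = Y = [0,1] with μ = ν the Lebesgue measure. Let (q_n) enumerate the rationals in [0,1] and choose α > 0 so that D := [0,1] \ ⋃_n (q_n - α/2^n, q_n + α/2^n) has Lebesgue measure 1/2. Define c(x,y) := 1_D(x). Then P_c = D_c = 1/2, but every lower semi-continuous function g : [0,1]² → [0,∞] with g ≤ c L-almost surely satisfies g = 0 L-almost surely. In particular no modification of the rectification of c on an L-negligible set is lower semi-continuous in the original topology. -/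
/-! Since `c(x, y)` depends on `x` alone, every coupling and every dual pair sees only the
first marginal, so both values equal `∫ 1_D = 1/2`. On the other hand the complement of `D`
contains an open set through every rational of `[0,1]`, so every open rectangle meeting
`[0,1]²` contains a rectangle of positive `μ ⊗ ν`-mass, hence not `L`-negligible, on which
`c = 0`. A lower semicontinuous `g > 0` at a point of `[0,1]²` is positive on such a
rectangle, so `g ≤ c` would fail there; hence `g` vanishes on all of `[0,1]²`. -/

open MeasureTheory Set

open Filter Topology

section LNeg

variable {X Y : Type*} [MeasurableSpace X] [MeasurableSpace Y] {μ : Measure X} {ν : Measure Y}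

theorem LNeg.of_disjoint_prod {A : Set (X × Y)} {s : Set X} {t : Set Y} (hs : MeasurableSet s)
    (ht : MeasurableSet t) (hμ : μ sᶜ = 0) (hν : ν tᶜ = 0) (h : Disjoint A (s ×ˢ t)) :
    LNeg μ ν A :=
  ⟨sᶜ, tᶜ, hs.compl, ht.compl, hμ, hν, compl_prod_eq_union s t ▸ h.subset_compl_right⟩

theorem LNeg.measure_eq_zero_or_of_prod_subset {A : Set (X × Y)} (hA : LNeg μ ν A)
    {s : Set X} {t : Set Y} (hst : s ×ˢ t ⊆ A) : μ s = 0 ∨ ν t = 0 := by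
  obtain ⟨M, N, -, -, hM, hN, hAMN⟩ := hA
  by_contra! h
  obtain ⟨x, hxs, hxM⟩ := sdiff_nonempty.2 fun hsM => h.1 (measure_mono_null hsM hM)
  obtain ⟨y, hyt, hyN⟩ := sdiff_nonempty.2 fun htN => h.2 (measure_mono_null htN hN)
  rcases hAMN (hst (mk_mem_prod hxs hyt)) with hx | hy
  exacts [hxM hx.1, hyN hy.2]

variable [TopologicalSpace X] [TopologicalSpace Y]

theorem LNeg.lowerSemicontinuous_eq_zero {g c : X × Y → ENNReal} (hg : LowerSemicontinuous g)
    (hgc : LNeg μ ν {p | ¬ g p ≤ c p}) {x : X} {y : Y}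
    (hx : ∀ u ∈ 𝓝 x, 0 < μ (u ∩ {x' | ∀ y', c (x', y') = 0})) (hy : ∀ v ∈ 𝓝 y, 0 < ν v) :
    g (x, y) = 0 := by
  by_contra hne
  obtain ⟨u, hu, v, hv, huv⟩ :=
    mem_nhds_prod_iff.1 (hg (x, y) 0 (pos_iff_ne_zero.2 hne))
  have hsub : (u ∩ {x' | ∀ y', c (x', y') = 0}) ×ˢ v ⊆ {p | ¬ g p ≤ c p} := by
    rintro ⟨x', y'⟩ ⟨⟨hx'u, hc⟩, hy'v⟩
    have hpos : 0 < g (x', y') := huv ⟨hx'u, hy'v⟩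
    simpa [hc y'] using hpos
  rcases hgc.measure_eq_zero_or_of_prod_subset hsub with h | h
  exacts [(hx u hu).ne' h, (hy v hv).ne' h]

end LNeg

section Couplings

variable {X : Type*} [MeasurableSpace X] {μ : Measure X}

theorem map_fst_map_diag : (μ.map fun x => (x, x)).map Prod.fst = μ := by
  rw [Measure.map_map measurable_fst (by fun_prop)]
  exact Measure.map_id

theorem map_snd_map_diag : (μ.map fun x => (x, x)).map Prod.snd = μ := by
  rw [Measure.map_map measurable_snd (by fun_prop)]
  exact Measure.map_id

theorem iInf_couplings_lintegral_comp_fst {f : X → ENNReal} (hf : Measurable f) :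
    (⨅ π ∈ {π : Measure (X × X) | π.map Prod.fst = μ ∧ π.map Prod.snd = μ},
      ∫⁻ p, f p.1 ∂π) = ∫⁻ x, f x ∂μ := by
  have hval : ∀ π ∈ {π : Measure (X × X) | π.map Prod.fst = μ ∧ π.map Prod.snd = μ},
      ∫⁻ p, f p.1 ∂π = ∫⁻ x, f x ∂μ := by
    rintro π ⟨hπ, -⟩
    rw [← hπ, lintegral_map hf measurable_fst]
  have hdiag : μ.map (fun x => (x, x)) ∈
      {π : Measure (X × X) | π.map Prod.fst = μ ∧ π.map Prod.snd = μ} :=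
    ⟨map_fst_map_diag, map_snd_map_diag⟩
  exact le_antisymm ((iInf₂_le _ hdiag).trans_eq (hval _ hdiag))
    (le_iInf₂ fun π hπ => (hval π hπ).ge)

variable [IsProbabilityMeasure μ] {s : Set X}

theorem integral_add_integral_le {φ ψ f : X → ℝ} (hφ : Integrable φ μ) (hψ : Integrable ψ μ)
    (hf : Integrable f μ) (hs : ∀ᵐ x ∂μ, x ∈ s) (h : ∀ x ∈ s, ∀ y ∈ s, φ x + ψ y ≤ f x) :
    ∫ x, φ x ∂μ + ∫ y, ψ y ∂μ ≤ ∫ x, f x ∂μ := by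
  have hφψ : ∀ᵐ x ∂μ, φ x + ∫ y, ψ y ∂μ ≤ f x := by
    filter_upwards [hs] with x hx
    have hψx : ∫ y, ψ y ∂μ ≤ f x - φ x := by
      simpa using integral_mono_ae hψ (integrable_const (f x - φ x))
        (hs.mono fun y hy => by linarith [h x hx y hy])
    linarith
  simpa [integral_add hφ (integrable_const _)] using
    integral_mono_ae (hφ.add (integrable_const _)) hf hφψ

/-- Weak duality is attained by `(φ, ψ) = (f, 0)` when the cost depends on the first
variable only. -/
theorem sSup_dual_eq_integral {c : X × X → EReal} {f : X → ℝ} (hf : Integrable f μ)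
    (hs : ∀ᵐ x ∂μ, x ∈ s) (hc : ∀ x y, c (x, y) = f x) :
    sSup {r : EReal | ∃ φ ψ : X → ℝ, Integrable φ μ ∧ Integrable ψ μ ∧
      (∀ x ∈ s, ∀ y ∈ s, (φ x : EReal) + (ψ y : EReal) ≤ c (x, y)) ∧
      r = ((∫ x, φ x ∂μ + ∫ y, ψ y ∂μ : ℝ) : EReal)} = ((∫ x, f x ∂μ : ℝ) : EReal) := by
  refine le_antisymm (sSup_le ?_) (le_sSup ⟨f, 0, hf, integrable_zero _ _ _, ?_, by simp⟩)
  · rintro r ⟨φ, ψ, hφ, hψ, hφψ, rfl⟩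
    refine EReal.coe_le_coe_iff.2 (integral_add_integral_le hφ hψ hf hs fun x hx y hy => ?_)
    simpa [hc, ← EReal.coe_add] using hφψ x hx y hy
  · intro x _ y _
    simp [hc]

end Couplings

section UnitInterval

instance inst_s18 : IsProbabilityMeasure muI :=
  ⟨by simp [muI, Real.volume_Icc]⟩

theorem nonempty_interior_inter_Ioo {x : ℝ} (hx : x ∈ Icc 0 1) {u : Set ℝ} (hu : u ∈ 𝓝 x) :
    (interior u ∩ Ioo 0 1).Nonempty :=
  mem_closure_iff_nhds.1 (by rwa [closure_Ioo zero_ne_one]) _ (interior_mem_nhds.2 hu)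

theorem muI_pos_of_mem_nhds {x : ℝ} (hx : x ∈ Icc 0 1) {u : Set ℝ} (hu : u ∈ 𝓝 x) :
    0 < muI u := by
  rw [muI, Measure.restrict_apply' measurableSet_Icc]
  refine ((isOpen_interior.inter isOpen_Ioo).measure_pos volume
    (nonempty_interior_inter_Ioo hx hu)).trans_le (measure_mono ?_)
  exact inter_subset_inter interior_subset Ioo_subset_Icc_self

theorem muI_inter_pos_of_rat_subset {U : Set ℝ} (hU : IsOpen U)
    (hQ : ∀ r : ℚ, (r : ℝ) ∈ Ioo 0 1 → (r : ℝ) ∈ U) {x : ℝ} (hx : x ∈ Icc 0 1) {u : Set ℝ}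
    (hu : u ∈ 𝓝 x) : 0 < muI (u ∩ U) := by
  obtain ⟨r, hru, hr⟩ := Rat.denseRange_cast.exists_mem_open
    (isOpen_interior.inter isOpen_Ioo) (nonempty_interior_inter_Ioo hx hu)
  exact muI_pos_of_mem_nhds (Ioo_subset_Icc_self hr)
    (inter_mem (mem_interior_iff_mem_nhds.1 hru) (hU.mem_nhds (hQ r hr)))

end UnitInterval

open Classical in
theorem stmt18 (q : ℕ → ℝ)
    (hq : Set.range q = Set.Icc (0:ℝ) 1 ∩ Set.range ((↑) : ℚ → ℝ))
    (α : ℝ) (hα : 0 < α)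
    (D : Set ℝ)
    (hD : D = Set.Icc 0 1 \ ⋃ n : ℕ, Set.Ioo (q n - α / 2 ^ n) (q n + α / 2 ^ n))
    (hvol : volume D = 1 / 2)
    (c : ℝ × ℝ → ENNReal) (hc : c = fun p => if p.1 ∈ D then 1 else 0) :
    -- the primal value is 1/2
    (⨅ π ∈ {π : Measure (ℝ × ℝ) | π.map Prod.fst = muI ∧ π.map Prod.snd = muI},
      ∫⁻ p, c p ∂π) = 1 / 2 ∧
    -- the dual value is 1/2
    sSup {r : EReal | ∃ φ ψ : ℝ → ℝ, Integrable φ muI ∧ Integrable ψ muI ∧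
      (∀ x ∈ Set.Icc (0:ℝ) 1, ∀ y ∈ Set.Icc (0:ℝ) 1,
        (φ x : EReal) + (ψ y : EReal) ≤ (c (x, y) : EReal)) ∧
      r = ((∫ x, φ x ∂muI + ∫ y, ψ y ∂muI : ℝ) : EReal)} = (((1:ℝ)/2 : ℝ) : EReal) ∧
    -- but any l.s.c. function which is L-a.s. ≤ c vanishes L-almost surely
    ∀ g : ℝ × ℝ → ENNReal, LowerSemicontinuous g →
      LNeg muI muI {p : ℝ × ℝ | ¬ g p ≤ c p} → LNeg muI muI {p : ℝ × ℝ | g p ≠ 0} := by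
  set U := ⋃ n : ℕ, Ioo (q n - α / 2 ^ n) (q n + α / 2 ^ n)
  have hDm : MeasurableSet D := hD ▸ measurableSet_Icc.diff (.iUnion fun _ => measurableSet_Ioo)
  have hmuD : muI D = 1 / 2 := by
    rw [muI, Measure.restrict_apply hDm, inter_eq_self_of_subset_left (hD ▸ sdiff_subset), hvol]
  have hIcc : ∀ᵐ x ∂muI, x ∈ Icc (0:ℝ) 1 := ae_restrict_mem measurableSet_Icc
  refine ⟨?_, ?_, fun g hg hgc => ?_⟩
  · have hcD : c = fun p => D.indicator 1 p.1 := by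
      ext p; simp [hc, indicator_apply]
    rw [hcD, iInf_couplings_lintegral_comp_fst (measurable_one.indicator hDm),
      lintegral_indicator_one hDm, hmuD]
  · have hcD : ∀ x y, ((c (x, y) : ENNReal) : EReal) = ((D.indicator 1 x : ℝ) : EReal) := by
      intro x y; simp only [hc, indicator_apply]; split_ifs <;> simp
    rw [sSup_dual_eq_integral (c := fun p => (c p : EReal))
        ((integrable_const 1).indicator hDm) hIcc hcD,
      integral_indicator_one hDm, measureReal_def, hmuD]
    norm_num
  · have hUD : U ⊆ {x | ∀ y, c (x, y) = 0} := fun x hx y => by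
      simp [hc, hD, show x ∈ U from hx]
    have hQU : ∀ r : ℚ, (r : ℝ) ∈ Ioo 0 1 → (r : ℝ) ∈ U := fun r hr => by
      obtain ⟨n, hn⟩ : (r : ℝ) ∈ range q := hq ▸ ⟨Ioo_subset_Icc_self hr, r, rfl⟩
      exact mem_iUnion.2 ⟨n, hn ▸ ⟨by simp; positivity, by simp; positivity⟩⟩
    refine LNeg.of_disjoint_prod measurableSet_Icc measurableSet_Icc
      (ae_iff.1 hIcc) (ae_iff.1 hIcc) (disjoint_left.2 ?_)
    rintro ⟨x, y⟩ hne ⟨hx, hy⟩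
    refine hne (hgc.lowerSemicontinuous_eq_zero hg (fun u hu => ?_)
      (fun v hv => muI_pos_of_mem_nhds hy hv))
    exact (muI_inter_pos_of_rat_subset (isOpen_iUnion fun _ => isOpen_Ioo) hQU hx hu).trans_le
      (measure_mono (inter_subset_inter_right u hUD))
end
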